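/- arXiv:1610.09734 — 9 statements merged into one kernel-verified Lean document; each statement's English description precedes it below -/
import Mathlib

section
/- Let X = (X₁,…,X_d) be a random vector on a probability space with joint distribution P(X₁ ≤ x₁,…,X_d ≤ x_d) = C(F₁(x₁),…,F_d(x_d)) and joint survival P(X₁ > x₁,…,X_d > x_d) = Ĉ(F₁(x₁),…,F_d(x_d)) for all x ∈ ℝ^d, where C is a d-copula with survival function Ĉ and Fᵢ(x) = P(Xᵢ ≤ x). Let φ : ℝ^d → ℝ be nondecreasing in each argument, and let Q₀, Q̂₁ : [0,1]^d → [0,1] satisfy Q₀(u) ≤ C(u) and Q̂₁(u) ≤ Ĉ(u) for all u ∈ [0,1]^d. Then for every s ∈ ℝ and every x ∈ ℝ^d: if φ(x) ≤ s then P(φ(X) ≤ s) ≥ Q₀(F₁(x₁),…,F_d(x_d)), and if φ(x) > s then P(φ(X) ≤ s) ≤ 1 − Q̂₁(F₁(x₁),…,F_d(x_d)). -/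
open MeasureTheory Filter

noncomputable section

/-- The closed unit cube in `ℝ^d`. -/
def unitCube (d : ℕ) : Set (Fin d → ℝ) := {u | ∀ i, u i ∈ Set.Icc (0 : ℝ) 1}

/-- A `d`-quasi-copula (conditions imposed on the unit cube). -/
def IsQuasiCopula (d : ℕ) (Q : (Fin d → ℝ) → ℝ) : Prop :=
  (∀ u ∈ unitCube d, Q u ∈ Set.Icc (0 : ℝ) 1) ∧
  (∀ u ∈ unitCube d, (∃ i, u i = 0) → Q u = 0) ∧
  (∀ (i : Fin d), ∀ t ∈ Set.Icc (0 : ℝ) 1, Q (fun j => if j = i then t else 1) = t) ∧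
  (∀ u ∈ unitCube d, ∀ v ∈ unitCube d, (∀ i, u i ≤ v i) → Q u ≤ Q v) ∧
  (∀ u ∈ unitCube d, ∀ v ∈ unitCube d, |Q u - Q v| ≤ ∑ i, |u i - v i|)

/-- The `C`-volume of the box `(a, b]`, via the alternating sum over the vertices. -/
def boxVolume (d : ℕ) (C : (Fin d → ℝ) → ℝ) (a b : Fin d → ℝ) : ℝ :=
  ∑ ε : Fin d → Bool,
    (-1 : ℝ) ^ (Finset.univ.filter fun i => ε i).card * C (fun i => if ε i then a i else b i)

/-- A `d`-copula: a `d`-quasi-copula that is `d`-increasing. -/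
def IsCopula (d : ℕ) (C : (Fin d → ℝ) → ℝ) : Prop :=
  IsQuasiCopula d C ∧
  ∀ a ∈ unitCube d, ∀ b ∈ unitCube d, (∀ i, a i ≤ b i) → 0 ≤ boxVolume d C a b

/-- The survival function `Ĉ(u) = V_C([u₁,1] × ⋯ × [u_d,1])` of a `d`-copula `C`. -/
def survivalFn (d : ℕ) (C : (Fin d → ℝ) → ℝ) (u : Fin d → ℝ) : ℝ :=
  ∑ ε : Fin d → Bool,
    (-1 : ℝ) ^ (Finset.univ.filter fun i => ε i).card * C (fun i => if ε i then u i else 1)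

/-- The lower Fréchet–Hoeffding bound `W_d`. -/
def FHlower (d : ℕ) (u : Fin d → ℝ) : ℝ := max 0 ((∑ i, u i) - (d : ℝ) + 1)

/-- The upper Fréchet–Hoeffding bound `M_d`. -/
def FHupper {d : ℕ} (hd : 0 < d) (u : Fin d → ℝ) : ℝ :=
  Finset.univ.inf' ⟨⟨0, hd⟩, Finset.mem_univ _⟩ u

/-- The one-point improved upper Fréchet–Hoeffding bound `Q̄^{u,α}`. -/
def Qup {d : ℕ} (hd : 0 < d) (u : Fin d → ℝ) (α : ℝ) (v : Fin d → ℝ) : ℝ :=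
  min (FHupper hd v) (α + ∑ i, max (v i - u i) 0)

/-- The one-point improved lower Fréchet–Hoeffding bound `Q̲^{u,α}`. -/
def Qlow (d : ℕ) (u : Fin d → ℝ) (α : ℝ) (v : Fin d → ℝ) : ℝ :=
  max (FHlower d v) (α - ∑ i, max (u i - v i) 0)

/-- The Kolmogorov–Smirnov distance on the unit cube. -/
def DKS (d : ℕ) (Q Q' : (Fin d → ℝ) → ℝ) : ℝ :=
  sSup ((fun v => |Q v - Q' v|) '' unitCube d)

/-!
Monotonicity of `φ` gives `{X ≤ x} ⊆ {φ(X) ≤ s}` when `φ x ≤ s`, and `{φ(X) ≤ s} ⊆ {X > x}ᶜ` when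
`s < φ x`; the two Sklar identities turn the measures of these orthants into `C` and `Ĉ`.

Since `X` is not assumed measurable, the complement step needs `{X > x}` to be null measurable.
It is, because each `{Xᵢ ≤ t}` satisfies `P {Xᵢ ≤ t} + P {Xᵢ > t} ≤ 1`: by continuity from below,
`P {Xᵢ > t}` is a limit of survival probabilities `Ĉ(v)` with `vᵢ = Fᵢ(t)`, and `Ĉ(v) ≤ 1 - vᵢ`
because `Ĉ` is antitone on the cube (splitting a box along one coordinate splits its `C`-volume).
-/

section Copula

variable {d : ℕ}

lemma neg_one_pow_card_filter_eq_prod (ε : Fin d → Bool) :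
    (-1 : ℝ) ^ (Finset.univ.filter fun i => ε i).card = ∏ i, if ε i then -1 else 1 := by
  rw [Finset.prod_ite]
  simp

lemma neg_one_pow_card_filter_update_not (ε : Fin d → Bool) (j : Fin d) :
    (-1 : ℝ) ^ (Finset.univ.filter fun i => Function.update ε j (!ε j) i).card
      = -(-1 : ℝ) ^ (Finset.univ.filter fun i => ε i).card := by
  classical
  simp only [neg_one_pow_card_filter_eq_prod, Fintype.prod_eq_mul_prod_compl j]
  rw [Function.update_self]
  have hcompl : ∀ i ∈ ({j}ᶜ : Finset (Fin d)),
      (if Function.update ε j (!ε j) i then (-1 : ℝ) else 1) = if ε i then -1 else 1 := by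
    intro i hi
    rw [Function.update_of_ne (by simpa using hi)]
  rw [Finset.prod_congr rfl hcompl]
  cases ε j <;> simp

lemma sum_neg_one_pow_card_mul_eq_zero {G : (Fin d → Bool) → ℝ} (j : Fin d)
    (hG : ∀ ε, G (Function.update ε j (!ε j)) = G ε) :
    ∑ ε : Fin d → Bool, (-1 : ℝ) ^ (Finset.univ.filter fun i => ε i).card * G ε = 0 := by
  have hflip_involutive : Function.Involutive fun ε : Fin d → Bool => Function.update ε j (!ε j) :=
    fun ε => by simp
  have hflip := Fintype.sum_bijective _ hflip_involutive.bijective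
    (fun ε => (-1 : ℝ) ^ (Finset.univ.filter fun i => ε i).card * G ε)
    (fun ε => -((-1 : ℝ) ^ (Finset.univ.filter fun i => ε i).card * G ε))
    (fun ε => by rw [neg_one_pow_card_filter_update_not, hG, neg_mul, neg_neg])
  rw [Finset.sum_neg_distrib] at hflip
  linarith

theorem boxVolume_eq_add_update (C : (Fin d → ℝ) → ℝ) (a b : Fin d → ℝ) (j : Fin d) (m : ℝ) :
    boxVolume d C a b
      = boxVolume d C (Function.update a j m) b + boxVolume d C a (Function.update b j m) := by
  have hvertex : ∀ ε : Fin d → Bool,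
      C (fun i => if ε i then Function.update a j m i else b i)
        + C (fun i => if ε i then a i else Function.update b j m i)
      = C (fun i => if ε i then a i else b i)
        + C (Function.update (fun i => if ε i then a i else b i) j m) := by
    intro ε
    cases h : ε j
    · congr 2 <;> funext i <;> by_cases hi : i = j <;> simp_all [Function.update]
    · rw [add_comm]
      congr 2 <;> funext i <;> by_cases hi : i = j <;> simp_all [Function.update]
  -- the vertex terms with coordinate `j` moved to `m` cancel in pairs `ε`, `update ε j (!ε j)`
  have hzero := sum_neg_one_pow_card_mul_eq_zero j
    (G := fun ε => C (Function.update (fun i => if ε i then a i else b i) j m))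
    (fun ε => by
      congr 1; funext i; by_cases hi : i = j <;> simp [Function.update, hi])
  simp only [boxVolume]
  rw [← Finset.sum_add_distrib]
  simp_rw [← mul_add, hvertex, mul_add]
  rw [Finset.sum_add_distrib, hzero, add_zero]

variable {C : (Fin d → ℝ) → ℝ}

lemma survivalFn_update_le (hC : IsCopula d C) {u : Fin d → ℝ} (hu : u ∈ unitCube d)
    (j : Fin d) {t : ℝ} (hut : u j ≤ t) (ht : t ≤ 1) :
    survivalFn d C (Function.update u j t) ≤ survivalFn d C u := by
  have hsplit := boxVolume_eq_add_update C u (fun _ => 1) j t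
  have hbox : 0 ≤ boxVolume d C u (Function.update (fun _ => 1) j t) := by
    refine hC.2 u hu _ (fun i => ?_) (fun i => ?_) <;>
      by_cases hi : i = j <;>
      simp [Function.update, hi, hut, ht, (hu i).2, (hu j).1.trans hut]
  change boxVolume d C _ _ ≤ boxVolume d C _ _
  linarith

lemma survivalFn_antitoneOn (hC : IsCopula d C) {u v : Fin d → ℝ} (hu : u ∈ unitCube d)
    (hv : v ∈ unitCube d) (huv : ∀ i, u i ≤ v i) : survivalFn d C v ≤ survivalFn d C u := by
  classical
  suffices h : ∀ S : Finset (Fin d),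
      survivalFn d C (fun i => if i ∈ S then v i else u i) ≤ survivalFn d C u by
    simpa using h Finset.univ
  intro S
  induction S using Finset.induction_on with
  | empty => simp
  | @insert j S hj ih =>
    have hmem : (fun i => if i ∈ S then v i else u i) ∈ unitCube d := fun i => by
      dsimp only
      split_ifs
      · exact hv i
      · exact hu i
    refine le_trans (le_of_eq ?_)
      ((survivalFn_update_le hC hmem j (by simpa [hj] using huv j) (hv j).2).trans ih)
    congr 1
    funext i
    by_cases hi : i = j <;> simp [Function.update, hi]

lemma survivalFn_single (hC : IsCopula d C) (i : Fin d) {t : ℝ} (ht : t ∈ Set.Icc 0 1) :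
    survivalFn d C (Function.update 0 i t) = 1 - t := by
  classical
  set ε₀ : Fin d → Bool := fun _ => false
  set ε₁ : Fin d → Bool := Function.update ε₀ i true
  have hvertex_mem : ∀ ε : Fin d → Bool,
      (fun k => if ε k then Function.update (0 : Fin d → ℝ) i t k else 1) ∈ unitCube d := by
    intro ε k
    dsimp only
    by_cases hk : k = i <;> split_ifs <;> simp [Function.update, hk, ht.1, ht.2]
  have hgrounded : ∀ ε, ε ≠ ε₀ → ε ≠ ε₁ →
      C (fun k => if ε k then Function.update (0 : Fin d → ℝ) i t k else 1) = 0 := by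
    intro ε h₀ h₁
    obtain ⟨k, hki, hεk⟩ : ∃ k, k ≠ i ∧ ε k = true := by
      by_contra! hfalse
      have hε : ε = Function.update ε₀ i (ε i) := by
        funext k
        by_cases hk : k = i
        · simp [hk]
        · simpa [ε₀, hk] using hfalse k hk
      cases hεi : ε i <;> rw [hεi] at hε
      · exact h₀ (hε.trans (by simp [ε₀]))
      · exact h₁ hε
    exact hC.1.2.1 _ (hvertex_mem ε) ⟨k, by simp [hεk, hki]⟩
  have hne : ε₀ ≠ ε₁ := fun h => by simpa [ε₀, ε₁] using congrFun h i
  have hmargin := hC.1.2.2.1 i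
  rw [survivalFn, Finset.sum_eq_add ε₀ ε₁ hne
    (fun ε _ hε => by rw [hgrounded ε hε.1 hε.2, mul_zero]) (by simp) (by simp)]
  have hone : C (fun _ => 1) = 1 := by simpa using hmargin 1 ⟨zero_le_one, le_rfl⟩
  have hfilter : (Finset.univ.filter fun k => ε₁ k) = {i} := by
    ext k; by_cases hk : k = i <;> simp [ε₁, ε₀, Function.update, hk]
  have hvertex₁ : (fun k => if ε₁ k then Function.update (0 : Fin d → ℝ) i t k else 1)
      = fun k => if k = i then t else 1 := by
    funext k; by_cases hk : k = i <;> simp [ε₁, ε₀, Function.update, hk]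
  simp [ε₀, hfilter, hvertex₁, hone, hmargin t ht]
  ring

lemma survivalFn_le_one_sub (hC : IsCopula d C) {v : Fin d → ℝ} (hv : v ∈ unitCube d)
    (i : Fin d) : survivalFn d C v ≤ 1 - v i := by
  rw [← survivalFn_single hC i (hv i)]
  refine survivalFn_antitoneOn hC (fun k => ?_) hv (fun k => ?_) <;>
    by_cases hk : k = i <;> simp [Function.update, hk, (hv k).1, (hv i).1, (hv i).2]

end Copula

lemma nullMeasurableSet_of_measure_add_measure_compl_le {α : Type*} [MeasurableSpace α]
    {μ : Measure α} [IsFiniteMeasure μ] {s : Set α} (h : μ s + μ sᶜ ≤ μ Set.univ) :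
    NullMeasurableSet s μ := by
  set t := toMeasurable μ s
  have ht : MeasurableSet t := measurableSet_toMeasurable μ s
  have hst : s ⊆ t := subset_toMeasurable μ s
  have hcompl : μ sᶜ = μ (t \ s) + μ tᶜ := by
    rw [← measure_inter_add_sdiff sᶜ ht, Set.inter_comm, Set.sdiff_eq, Set.sdiff_eq,
      Set.inter_eq_right.mpr (Set.compl_subset_compl.mpr hst)]
  have hnull : μ (t \ s) = 0 := by
    rw [hcompl, add_comm (μ (t \ s)), ← add_assoc, ← measure_toMeasurable s,
      measure_add_measure_compl ht] at h
    exact nonpos_iff_eq_zero.mp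
      (ENNReal.le_of_add_le_add_left (measure_ne_top μ _) (h.trans (add_zero _).ge))
  exact ht.nullMeasurableSet.congr (ae_eq_set.mpr ⟨hnull, by simp [Set.sdiff_eq_empty.mpr hst]⟩)

section RandomVector

variable {d : ℕ} {Ω : Type*} [MeasurableSpace Ω] {P : Measure Ω} [IsProbabilityMeasure P]
  {X : Ω → Fin d → ℝ} {C : (Fin d → ℝ) → ℝ} {F : Fin d → ℝ → ℝ}

lemma mem_unitCube_of_cdf (hF : ∀ i x, F i x = (P {ω | X ω i ≤ x}).toReal) (y : Fin d → ℝ) :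
    (fun i => F i (y i)) ∈ unitCube d := fun i => by
  dsimp only
  rw [Set.mem_Icc, hF]
  exact ⟨ENNReal.toReal_nonneg,
    ENNReal.toReal_le_of_le_ofReal zero_le_one (by simpa using prob_le_one)⟩

lemma measure_lt_coord_le_one_sub (hC : IsCopula d C)
    (hF : ∀ i x, F i x = (P {ω | X ω i ≤ x}).toReal)
    (hSurv : ∀ x : Fin d → ℝ,
      (P {ω | ∀ i, x i < X ω i}).toReal = survivalFn d C (fun i => F i (x i)))
    (i : Fin d) (t : ℝ) : P {ω | t < X ω i} ≤ ENNReal.ofReal (1 - F i t) := by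
  set y : ℕ → Fin d → ℝ := fun n => Function.update (fun _ => -(n : ℝ)) i t
  set B : ℕ → Set Ω := fun n => {ω | ∀ j, y n j < X ω j}
  have hmono : Monotone B := by
    intro n m hnm ω hω j
    refine lt_of_le_of_lt ?_ (hω j)
    by_cases hj : j = i
    · simp [y, hj]
    · simpa [y, hj] using hnm
  have hunion : ⋃ n, B n = {ω | t < X ω i} := by
    ext ω
    simp only [B, Set.mem_iUnion, Set.mem_ofPred_eq]
    refine ⟨fun ⟨n, hn⟩ => by simpa [y] using hn i, fun hω => ?_⟩
    obtain ⟨n, hn⟩ := exists_nat_gt (∑ j, |X ω j|)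
    refine ⟨n, fun j => ?_⟩
    by_cases hj : j = i
    · simpa [y, hj] using hω
    · have := Finset.single_le_sum (fun k _ => abs_nonneg (X ω k)) (Finset.mem_univ j)
      simp only [y, Function.update_of_ne hj]
      linarith [neg_abs_le (X ω j)]
  rw [← hunion, hmono.measure_iUnion]
  refine iSup_le fun n => ?_
  rw [← ENNReal.ofReal_toReal (measure_ne_top P (B n)), hSurv]
  refine ENNReal.ofReal_le_ofReal ?_
  simpa [y] using survivalFn_le_one_sub hC (mem_unitCube_of_cdf hF (y n)) i

lemma nullMeasurableSet_coord_le (hC : IsCopula d C)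
    (hF : ∀ i x, F i x = (P {ω | X ω i ≤ x}).toReal)
    (hSurv : ∀ x : Fin d → ℝ,
      (P {ω | ∀ i, x i < X ω i}).toReal = survivalFn d C (fun i => F i (x i)))
    (i : Fin d) (t : ℝ) : NullMeasurableSet {ω | X ω i ≤ t} P := by
  refine nullMeasurableSet_of_measure_add_measure_compl_le ?_
  have hcompl : {ω | X ω i ≤ t}ᶜ = {ω | t < X ω i} := by ext; simp
  have hFt := mem_unitCube_of_cdf hF (fun _ => t) i
  rw [hcompl, measure_univ, ← ENNReal.ofReal_toReal (measure_ne_top P {ω | X ω i ≤ t}), ← hF]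
  calc ENNReal.ofReal (F i t) + P {ω | t < X ω i}
      ≤ ENNReal.ofReal (F i t) + ENNReal.ofReal (1 - F i t) :=
        add_le_add_right (measure_lt_coord_le_one_sub hC hF hSurv i t) _
    _ = 1 := by rw [← ENNReal.ofReal_add hFt.1 (by linarith [hFt.2])]; simp

end RandomVector

theorem improved_standard_bounds_general {d : ℕ} {Ω : Type*} [MeasurableSpace Ω]
    (P : Measure Ω) [IsProbabilityMeasure P] (X : Ω → Fin d → ℝ)
    (C : (Fin d → ℝ) → ℝ) (hC : IsCopula d C)
    (F : Fin d → ℝ → ℝ) (hF : ∀ i x, F i x = (P {ω | X ω i ≤ x}).toReal)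
    (hSklar : ∀ x : Fin d → ℝ,
      (P {ω | ∀ i, X ω i ≤ x i}).toReal = C (fun i => F i (x i)))
    (hSurv : ∀ x : Fin d → ℝ,
      (P {ω | ∀ i, x i < X ω i}).toReal = survivalFn d C (fun i => F i (x i)))
    (φ : (Fin d → ℝ) → ℝ) (hφ : ∀ x y : Fin d → ℝ, (∀ i, x i ≤ y i) → φ x ≤ φ y)
    (Q₀ Q₁ : (Fin d → ℝ) → ℝ)
    (hQ₀ : ∀ u ∈ unitCube d, Q₀ u ≤ C u)
    (hQ₁ : ∀ u ∈ unitCube d, Q₁ u ≤ survivalFn d C u)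
    (s : ℝ) (x : Fin d → ℝ) :
    (φ x ≤ s → Q₀ (fun i => F i (x i)) ≤ (P {ω | φ (X ω) ≤ s}).toReal) ∧
    (s < φ x → (P {ω | φ (X ω) ≤ s}).toReal ≤ 1 - Q₁ (fun i => F i (x i))) := by
  have hFx := mem_unitCube_of_cdf hF x
  constructor
  · intro hs
    have hsub : {ω | ∀ i, X ω i ≤ x i} ⊆ {ω | φ (X ω) ≤ s} := fun ω hω => (hφ _ _ hω).trans hs
    calc Q₀ (fun i => F i (x i)) ≤ C (fun i => F i (x i)) := hQ₀ _ hFx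
      _ = (P {ω | ∀ i, X ω i ≤ x i}).toReal := (hSklar x).symm
      _ ≤ (P {ω | φ (X ω) ≤ s}).toReal := measureReal_mono hsub
  · intro hs
    set B := {ω | ∀ i, x i < X ω i}
    have hB : NullMeasurableSet B P := by
      have hB_eq : B = ⋂ i, {ω | X ω i ≤ x i}ᶜ := by ext; simp [B]
      rw [hB_eq]
      exact .iInter fun i => (nullMeasurableSet_coord_le hC hF hSurv i (x i)).compl
    have hsub : {ω | φ (X ω) ≤ s} ⊆ Bᶜ := fun ω hω hB =>
      (hs.trans_le ((hφ _ _ fun i => (hB i).le).trans hω)).false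
    calc (P {ω | φ (X ω) ≤ s}).toReal ≤ (P Bᶜ).toReal := measureReal_mono hsub
      _ = 1 - survivalFn d C (fun i => F i (x i)) := by
        rw [← hSurv x]
        exact probReal_compl_eq_one_sub₀ hB
      _ ≤ 1 - Q₁ (fun i => F i (x i)) := sub_le_sub_left (hQ₁ _ hFx) 1

/-- the improved standard bounds for a componentwise nondecreasing aggregation. -/
theorem improved_standard_bounds {d : ℕ} {Ω : Type*} [MeasurableSpace Ω]
    (P : Measure Ω) [IsProbabilityMeasure P] (X : Ω → Fin d → ℝ)
    (C : (Fin d → ℝ) → ℝ) (hC : IsCopula d C)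
    (F : Fin d → ℝ → ℝ) (hF : ∀ i x, F i x = (P {ω | X ω i ≤ x}).toReal)
    (hSklar : ∀ x : Fin d → ℝ,
      (P {ω | ∀ i, X ω i ≤ x i}).toReal = C (fun i => F i (x i)))
    (hSurv : ∀ x : Fin d → ℝ,
      (P {ω | ∀ i, x i < X ω i}).toReal = survivalFn d C (fun i => F i (x i)))
    (φ : (Fin d → ℝ) → ℝ) (hφ : ∀ x y : Fin d → ℝ, (∀ i, x i ≤ y i) → φ x ≤ φ y)
    (Q₀ Q₁ : (Fin d → ℝ) → ℝ)
    (hQ₀Range : ∀ u ∈ unitCube d, Q₀ u ∈ Set.Icc (0 : ℝ) 1)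
    (hQ₁Range : ∀ u ∈ unitCube d, Q₁ u ∈ Set.Icc (0 : ℝ) 1)
    (hQ₀ : ∀ u ∈ unitCube d, Q₀ u ≤ C u)
    (hQ₁ : ∀ u ∈ unitCube d, Q₁ u ≤ survivalFn d C u)
    (s : ℝ) (x : Fin d → ℝ) :
    (φ x ≤ s → Q₀ (fun i => F i (x i)) ≤ (P {ω | φ (X ω) ≤ s}).toReal) ∧
    (s < φ x → (P {ω | φ (X ω) ≤ s}).toReal ≤ 1 - Q₁ (fun i => F i (x i))) :=
  improved_standard_bounds_general P X C hC F hF hSklar hSurv φ hφ Q₀ Q₁ hQ₀ hQ₁ s x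
end
end

section
/- Let J₁,…,J_m be nonempty subsets of {1,…,d}, let F₁,…,F_d and G₁,…,G_m be cumulative distribution functions on ℝ, and let s ∈ ℝ. Let α = (α₁,…,α_m) ∈ ℝ₊^m satisfy Σ_{n=1}^m αₙ max_{j∈Jₙ} xⱼ ≥ Σ_{i=1}^d xᵢ for all x ∈ ℝ^d. Then for every probability measure μ on ℝ^d with μ{x : xᵢ ≤ t} = Fᵢ(t) for all t ∈ ℝ and i = 1,…,d, and μ{x : max_{j∈Jₙ} xⱼ ≤ t} = Gₙ(t) for all t ∈ ℝ and n = 1,…,m, it holds that μ{x ∈ ℝ^d : Σ_{i=1}^d xᵢ ≤ s} ≥ inf{ν{y ∈ ℝ^m : Σ_{n=1}^m αₙ yₙ ≤ s} : ν a probability measure on ℝ^m with ν{y : yₙ ≤ t} = Gₙ(t) for all t ∈ ℝ, n = 1,…,m}. -/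
open MeasureTheory Filter

noncomputable section

/-- reduction-principle lower bound using distributions of partial maxima. -/
theorem reduction_lower_max {d m : ℕ}
    (J : Fin m → Finset (Fin d)) (hJ : ∀ n, (J n).Nonempty)
    (F : Fin d → ℝ → ℝ) (G : Fin m → ℝ → ℝ) (s : ℝ)
    (α : Fin m → ℝ) (hα : ∀ n, 0 ≤ α n)
    (hαA : ∀ x : Fin d → ℝ, ∑ i, x i ≤ ∑ n, α n * (J n).sup' (hJ n) x)
    (μ : Measure (Fin d → ℝ)) [IsProbabilityMeasure μ]
    (hμF : ∀ i t, (μ {x | x i ≤ t}).toReal = F i t)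
    (hμG : ∀ n t, (μ {x | (J n).sup' (hJ n) x ≤ t}).toReal = G n t) :
    sInf {r : ℝ | ∃ ν : Measure (Fin m → ℝ), IsProbabilityMeasure ν ∧
        (∀ n t, (ν {y | y n ≤ t}).toReal = G n t) ∧
        r = (ν {y | ∑ n, α n * y n ≤ s}).toReal} ≤
      (μ {x | ∑ i, x i ≤ s}).toReal := by
  set f : (Fin d → ℝ) → (Fin m → ℝ) := fun x n => (J n).sup' (hJ n) x with hf
  have hfm : Measurable f := by
    apply measurable_pi_lambda
    intro n
    have h := Finset.measurable_sup' (s := J n) (hJ n)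
      (f := fun i (x : Fin d → ℝ) => x i) (fun i _ => measurable_pi_apply i)
    have he : ((J n).sup' (hJ n) fun i (x : Fin d → ℝ) => x i)
        = fun x : Fin d → ℝ => (J n).sup' (hJ n) x := by
      funext x
      simp [Finset.sup'_apply]
    rwa [he] at h
  set ν : Measure (Fin m → ℝ) := μ.map f with hν
  have hνprob : IsProbabilityMeasure ν := Measure.isProbabilityMeasure_map hfm.aemeasurable
  have hmem : (ν {y | ∑ n, α n * y n ≤ s}).toReal ∈
      {r : ℝ | ∃ ν' : Measure (Fin m → ℝ), IsProbabilityMeasure ν' ∧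
        (∀ n t, (ν' {y | y n ≤ t}).toReal = G n t) ∧
        r = (ν' {y | ∑ n, α n * y n ≤ s}).toReal} := by
    refine ⟨ν, hνprob, ?_, rfl⟩
    intro n t
    rw [hν, Measure.map_apply hfm (measurableSet_le (measurable_pi_apply n) measurable_const)]
    exact hμG n t
  have hbdd : BddBelow {r : ℝ | ∃ ν' : Measure (Fin m → ℝ), IsProbabilityMeasure ν' ∧
      (∀ n t, (ν' {y | y n ≤ t}).toReal = G n t) ∧
      r = (ν' {y | ∑ n, α n * y n ≤ s}).toReal} := by
    refine ⟨0, ?_⟩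
    rintro r ⟨ν', _, _, rfl⟩
    exact ENNReal.toReal_nonneg
  refine le_trans (csInf_le hbdd hmem) ?_
  have hset : MeasurableSet {y : Fin m → ℝ | ∑ n, α n * y n ≤ s} := by
    apply measurableSet_le _ measurable_const
    exact Finset.measurable_sum _ fun n _ => (measurable_pi_apply n).const_mul _
  rw [hν, Measure.map_apply hfm hset]
  apply ENNReal.toReal_mono (measure_ne_top μ _)
  apply measure_mono
  intro x hx
  exact le_trans (hαA x) hx
end
end

section
/- Let J₁,…,J_m be nonempty subsets of {1,…,d}, let F₁,…,F_d and G₁,…,G_m be cumulative distribution functions on ℝ, and let s ∈ ℝ. Let α = (α₁,…,α_m) ∈ ℝ₊^m satisfy Σ_{n=1}^m αₙ max_{j∈Jₙ} xⱼ ≤ Σ_{i=1}^d xᵢ for all x ∈ ℝ₊^d. Then for every probability measure μ on ℝ^d that is concentrated on the nonnegative orthant, i.e. μ(ℝ₊^d) = 1, with μ{x : xᵢ ≤ t} = Fᵢ(t) for all t ∈ ℝ and i = 1,…,d, and μ{x : max_{j∈Jₙ} xⱼ ≤ t} = Gₙ(t) for all t ∈ ℝ and n = 1,…,m, it holds that μ{x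 ∈ ℝ^d : Σ_{i=1}^d xᵢ ≤ s} ≤ sup{ν{y ∈ ℝ^m : Σ_{n=1}^m αₙ yₙ ≤ s} : ν a probability measure on ℝ^m with ν{y : yₙ ≤ t} = Gₙ(t) for all t ∈ ℝ, n = 1,…,m}. -/
open MeasureTheory Filter

noncomputable section

/-- reduction-principle upper bound using distributions of partial maxima,
for nonnegative risks. -/
theorem reduction_upper_max {d m : ℕ}
    (J : Fin m → Finset (Fin d)) (hJ : ∀ n, (J n).Nonempty)
    (F : Fin d → ℝ → ℝ) (G : Fin m → ℝ → ℝ) (s : ℝ)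
    (α : Fin m → ℝ) (hα : ∀ n, 0 ≤ α n)
    (hαA : ∀ x : Fin d → ℝ, (∀ i, 0 ≤ x i) →
      ∑ n, α n * (J n).sup' (hJ n) x ≤ ∑ i, x i)
    (μ : Measure (Fin d → ℝ)) [IsProbabilityMeasure μ]
    (hμpos : μ {x | ∀ i, 0 ≤ x i} = 1)
    (hμF : ∀ i t, (μ {x | x i ≤ t}).toReal = F i t)
    (hμG : ∀ n t, (μ {x | (J n).sup' (hJ n) x ≤ t}).toReal = G n t) :
    (μ {x | ∑ i, x i ≤ s}).toReal ≤
      sSup {r : ℝ | ∃ ν : Measure (Fin m → ℝ), IsProbabilityMeasure ν ∧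
        (∀ n t, (ν {y | y n ≤ t}).toReal = G n t) ∧
        r = (ν {y | ∑ n, α n * y n ≤ s}).toReal} := by
  set T : (Fin d → ℝ) → (Fin m → ℝ) := fun x n => (J n).sup' (hJ n) x with hT
  have hTmeas : Measurable T := by
    apply measurable_pi_lambda
    intro n
    have h : Measurable ((J n).sup' (hJ n) (fun j (x : Fin d → ℝ) => x j)) :=
      Finset.measurable_sup' (hJ n) (fun j _ => measurable_pi_apply j)
    convert h using 1
    ext x
    simp [hT, Finset.sup'_apply]
  set ν : Measure (Fin m → ℝ) := μ.map T with hν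
  have hνprob : IsProbabilityMeasure ν := Measure.isProbabilityMeasure_map hTmeas.aemeasurable
  have hνG : ∀ n t, (ν {y | y n ≤ t}).toReal = G n t := by
    intro n t
    rw [hν, Measure.map_apply hTmeas (by
      exact measurableSet_le (measurable_pi_apply n) measurable_const)]
    exact hμG n t
  set r : ℝ := (ν {y | ∑ n, α n * y n ≤ s}).toReal with hr
  have hmem : r ∈ {r : ℝ | ∃ ν : Measure (Fin m → ℝ), IsProbabilityMeasure ν ∧
        (∀ n t, (ν {y | y n ≤ t}).toReal = G n t) ∧
        r = (ν {y | ∑ n, α n * y n ≤ s}).toReal} := ⟨ν, hνprob, hνG, rfl⟩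
  have hbdd : BddAbove {r : ℝ | ∃ ν : Measure (Fin m → ℝ), IsProbabilityMeasure ν ∧
        (∀ n t, (ν {y | y n ≤ t}).toReal = G n t) ∧
        r = (ν {y | ∑ n, α n * y n ≤ s}).toReal} := by
    refine ⟨1, ?_⟩
    rintro x ⟨ν', hν', -, rfl⟩
    calc (ν' {y | ∑ n, α n * y n ≤ s}).toReal ≤ (ν' Set.univ).toReal := by
          apply ENNReal.toReal_mono (by simp [measure_ne_top])
          exact measure_mono (Set.subset_univ _)
      _ = 1 := by simp
  refine le_trans ?_ (le_csSup hbdd hmem)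
  rw [hr, hν, Measure.map_apply hTmeas (by
    exact measurableSet_le (by fun_prop) measurable_const)]
  apply ENNReal.toReal_mono (by simp [measure_ne_top])
  have hsub : {x : Fin d → ℝ | ∑ i, x i ≤ s} ∩ {x | ∀ i, 0 ≤ x i}
      ⊆ T ⁻¹' {y | ∑ n, α n * y n ≤ s} := by
    rintro x ⟨hxs, hxpos⟩
    exact le_trans (hαA x hxpos) hxs
  have hmeasB : MeasurableSet {x : Fin d → ℝ | ∀ i, 0 ≤ x i} := by
    have : {x : Fin d → ℝ | ∀ i, 0 ≤ x i} = ⋂ i, {x | 0 ≤ x i} :=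
      Set.ext fun x => by simp
    rw [this]
    exact MeasurableSet.iInter fun i =>
      measurableSet_le measurable_const (measurable_pi_apply i)
  calc μ {x | ∑ i, x i ≤ s}
      = μ ({x : Fin d → ℝ | ∑ i, x i ≤ s} ∩ {x | ∀ i, 0 ≤ x i}) :=
        (measure_inter_conull ((prob_compl_eq_zero_iff hmeasB).mpr hμpos)).symm
    _ ≤ _ := measure_mono hsub
end
end

section
/- Let J₁,…,J_m be nonempty subsets of {1,…,d}, let F₁,…,F_d and H₁,…,H_m be cumulative distribution functions on ℝ, and let s ∈ ℝ. Let α = (α₁,…,α_m) ∈ ℝ₊^m satisfy Σ_{n=1}^m αₙ min_{j∈Jₙ} xⱼ ≤ Σ_{i=1}^d xᵢ for all x ∈ ℝ^d. Then for every probability measure μ on ℝ^d with μ{x : xᵢ ≤ t} = Fᵢ(t) for all t ∈ ℝ and i = 1,…,d, and μ{x : min_{j∈Jₙ} xⱼ ≤ t} = Hₙ(t) for all t ∈ ℝ and n = 1,…,m, it holds that μ{x ∈ ℝ^d : Σ_{i=1}^d xᵢ ≤ s} ≤ sup{ν{z ∈ ℝ^m : Σ_{n=1}^m αₙ zₙ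 ≤ s} : ν a probability measure on ℝ^m with ν{z : zₙ ≤ t} = Hₙ(t) for all t ∈ ℝ, n = 1,…,m}. -/
open MeasureTheory Filter

noncomputable section

/-- reduction-principle upper bound using distributions of partial minima. -/
theorem reduction_upper_min {d m : ℕ}
    (J : Fin m → Finset (Fin d)) (hJ : ∀ n, (J n).Nonempty)
    (F : Fin d → ℝ → ℝ) (H : Fin m → ℝ → ℝ) (s : ℝ)
    (α : Fin m → ℝ) (hα : ∀ n, 0 ≤ α n)
    (hαB : ∀ x : Fin d → ℝ, ∑ n, α n * (J n).inf' (hJ n) x ≤ ∑ i, x i)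
    (μ : Measure (Fin d → ℝ)) [IsProbabilityMeasure μ]
    (hμF : ∀ i t, (μ {x | x i ≤ t}).toReal = F i t)
    (hμH : ∀ n t, (μ {x | (J n).inf' (hJ n) x ≤ t}).toReal = H n t) :
    (μ {x | ∑ i, x i ≤ s}).toReal ≤
      sSup {r : ℝ | ∃ ν : Measure (Fin m → ℝ), IsProbabilityMeasure ν ∧
        (∀ n t, (ν {z | z n ≤ t}).toReal = H n t) ∧
        r = (ν {z | ∑ n, α n * z n ≤ s}).toReal} := by
  classical
  set T : (Fin d → ℝ) → (Fin m → ℝ) := fun x n => (J n).inf' (hJ n) x with hTdef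
  have hTmeas : Measurable T := by
    apply measurable_pi_lambda
    intro n
    have : Continuous fun x : Fin d → ℝ => (J n).inf' (hJ n) x := by
      apply Continuous.finset_inf'_apply
      intro i _
      exact continuous_apply i
    exact this.measurable
  set ν := μ.map T with hνdef
  haveI : IsProbabilityMeasure ν := Measure.isProbabilityMeasure_map hTmeas.aemeasurable
  have hνH : ∀ n t, (ν {z | z n ≤ t}).toReal = H n t := by
    intro n t
    rw [hνdef, Measure.map_apply hTmeas
      (measurableSet_le (measurable_pi_apply n) measurable_const)]
    exact hμH n t
  have hset : MeasurableSet {z : Fin m → ℝ | ∑ n, α n * z n ≤ s} := by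
    apply measurableSet_le _ measurable_const
    exact Finset.measurable_sum _ fun n _ => (measurable_pi_apply n).const_mul _
  have key : (μ {x | ∑ i, x i ≤ s}).toReal ≤ (ν {z | ∑ n, α n * z n ≤ s}).toReal := by
    rw [hνdef, Measure.map_apply hTmeas hset]
    apply ENNReal.toReal_mono (measure_ne_top _ _)
    apply measure_mono
    intro x hx
    exact le_trans (hαB x) hx
  refine key.trans (le_csSup ?_ ?_)
  · refine ⟨1, ?_⟩
    rintro r ⟨ν', hprob, _, rfl⟩
    exact ENNReal.toReal_le_of_le_ofReal zero_le_one (by simpa using prob_le_one)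
  · exact ⟨ν, ‹_›, hνH, rfl⟩
end
end

section
/- Let J₁,…,J_m be nonempty subsets of {1,…,d}, let F₁,…,F_d and H₁,…,H_m be cumulative distribution functions on ℝ, and let s ∈ ℝ. Let α = (α₁,…,α_m) ∈ ℝ₊^m satisfy Σ_{n=1}^m αₙ min_{j∈Jₙ} xⱼ ≥ Σ_{i=1}^d xᵢ for all x ∈ ℝ₋^d. Then for every probability measure μ on ℝ^d that is concentrated on the nonpositive orthant, i.e. μ(ℝ₋^d) = 1, with μ{x : xᵢ ≤ t} = Fᵢ(t) for all t ∈ ℝ and i = 1,…,d, and μ{x : min_{j∈Jₙ} xⱼ ≤ t} = Hₙ(t) for all t ∈ ℝ and n = 1,…,m, it holds that μ{x ∈ ℝ^d : Σ_{i=1}^d xᵢ ≤ s} ≥ inf{ν{z ∈ ℝ^m : Σ_{n=1}^m αₙ zₙ ≤ s} : ν a probability measure on ℝ^m with ν{z : zₙ ≤ t} = Hₙ(t) for all t ∈ ℝ, n = 1,…,m}. -/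
/-!
The law ν of the vector of block minima `(min_{j ∈ Jₙ} xⱼ)ₙ` under μ is itself a competitor in
the infimum, since its marginals are the `Hₙ`. As μ lives on the nonpositive orthant, the
constraint on α gives `∑ xᵢ ≤ ∑ αₙ min_{j ∈ Jₙ} xⱼ` μ-almost surely, so the event
`∑ αₙ zₙ ≤ s` for ν is contained, up to a null set, in the event `∑ xᵢ ≤ s` for μ.
-/

open MeasureTheory Filter

noncomputable section

theorem map_sublevel_le_of_ae_le {X Y : Type*} [MeasurableSpace X] [MeasurableSpace Y]
    {μ : Measure X} {f : X → Y} (hf : Measurable f) {φ : Y → ℝ} (hφ : Measurable φ)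
    {ψ : X → ℝ} (hψφ : ∀ᵐ x ∂μ, ψ x ≤ φ (f x)) (s : ℝ) :
    μ.map f {y | φ y ≤ s} ≤ μ {x | ψ x ≤ s} := by
  rw [Measure.map_apply hf (measurableSet_le hφ measurable_const)]
  exact measure_mono_ae (hψφ.mono fun x hx hxs => hx.trans hxs)

section BlockMin

variable {ι κ : Type*} (J : ι → Finset κ) (hJ : ∀ n, (J n).Nonempty)

def blockMin (x : κ → ℝ) (n : ι) : ℝ := (J n).inf' (hJ n) x

theorem continuous_blockMin : Continuous (blockMin J hJ) :=
  continuous_pi fun n => Continuous.finset_inf'_apply (hJ n) fun i _ => continuous_apply i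

theorem measurable_blockMin [Countable ι] [Countable κ] : Measurable (blockMin J hJ) :=
  (continuous_blockMin J hJ).measurable

theorem map_blockMin_apply_coord_le [Countable ι] [Countable κ] (μ : Measure (κ → ℝ))
    (n : ι) (t : ℝ) :
    μ.map (blockMin J hJ) {z | z n ≤ t} = μ {x | (J n).inf' (hJ n) x ≤ t} :=
  Measure.map_apply (measurable_blockMin J hJ) (measurableSet_le (measurable_pi_apply n)
    measurable_const)

end BlockMin

theorem ae_nonpos_of_measure_orthant_eq_one {κ : Type*} [Countable κ]
    {μ : Measure (κ → ℝ)} [IsProbabilityMeasure μ] (h : μ {x | ∀ i, x i ≤ 0} = 1) :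
    ∀ᵐ x ∂μ, ∀ i, x i ≤ 0 :=
  (ae_iff_measure_eq (measurableSet_Iic (a := (0 : κ → ℝ))).nullMeasurableSet).mpr
    (h.trans measure_univ.symm)

theorem reduction_lower_min_general {d m : ℕ}
    (J : Fin m → Finset (Fin d)) (hJ : ∀ n, (J n).Nonempty)
    (H : Fin m → ℝ → ℝ) (s : ℝ)
    (α : Fin m → ℝ)
    (hαB : ∀ x : Fin d → ℝ, (∀ i, x i ≤ 0) →
      ∑ i, x i ≤ ∑ n, α n * (J n).inf' (hJ n) x)
    (μ : Measure (Fin d → ℝ)) [IsProbabilityMeasure μ]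
    (hμneg : μ {x | ∀ i, x i ≤ 0} = 1)
    (hμH : ∀ n t, (μ {x | (J n).inf' (hJ n) x ≤ t}).toReal = H n t) :
    sInf {r : ℝ | ∃ ν : Measure (Fin m → ℝ), IsProbabilityMeasure ν ∧
        (∀ n t, (ν {z | z n ≤ t}).toReal = H n t) ∧
        r = (ν {z | ∑ n, α n * z n ≤ s}).toReal} ≤
      (μ {x | ∑ i, x i ≤ s}).toReal := by
  have hmeas := measurable_blockMin J hJ
  have hprob : IsProbabilityMeasure (μ.map (blockMin J hJ)) :=
    Measure.isProbabilityMeasure_map hmeas.aemeasurable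
  have hmarg : ∀ n t, (μ.map (blockMin J hJ) {z | z n ≤ t}).toReal = H n t := fun n t => by
    rw [map_blockMin_apply_coord_le, hμH]
  have hdom : ∀ᵐ x ∂μ, ∑ i, x i ≤ ∑ n, α n * blockMin J hJ x n :=
    (ae_nonpos_of_measure_orthant_eq_one hμneg).mono hαB
  have hle : μ.map (blockMin J hJ) {z | ∑ n, α n * z n ≤ s} ≤ μ {x | ∑ i, x i ≤ s} :=
    map_sublevel_le_of_ae_le hmeas (by fun_prop) hdom s
  refine le_trans (csInf_le ?_ ?_) (ENNReal.toReal_mono (measure_ne_top _ _) hle)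
  · exact ⟨0, by rintro r ⟨ν, -, -, rfl⟩; exact ENNReal.toReal_nonneg⟩
  · exact ⟨_, hprob, hmarg, rfl⟩

/-- reduction-principle lower bound using distributions of partial minima,
for nonpositive risks. -/
theorem reduction_lower_min {d m : ℕ}
    (J : Fin m → Finset (Fin d)) (hJ : ∀ n, (J n).Nonempty)
    (F : Fin d → ℝ → ℝ) (H : Fin m → ℝ → ℝ) (s : ℝ)
    (α : Fin m → ℝ) (hα : ∀ n, 0 ≤ α n)
    (hαB : ∀ x : Fin d → ℝ, (∀ i, x i ≤ 0) →
      ∑ i, x i ≤ ∑ n, α n * (J n).inf' (hJ n) x)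
    (μ : Measure (Fin d → ℝ)) [IsProbabilityMeasure μ]
    (hμneg : μ {x | ∀ i, x i ≤ 0} = 1)
    (hμF : ∀ i t, (μ {x | x i ≤ t}).toReal = F i t)
    (hμH : ∀ n t, (μ {x | (J n).inf' (hJ n) x ≤ t}).toReal = H n t) :
    sInf {r : ℝ | ∃ ν : Measure (Fin m → ℝ), IsProbabilityMeasure ν ∧
        (∀ n t, (ν {z | z n ≤ t}).toReal = H n t) ∧
        r = (ν {z | ∑ n, α n * z n ≤ s}).toReal} ≤
      (μ {x | ∑ i, x i ≤ s}).toReal :=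
  reduction_lower_min_general J hJ H s α hαB μ hμneg hμH
end
end

section
/- Let S be a nonempty compact subset of [0,1]^d and let Q* be a d-quasi-copula. Then every d-quasi-copula Q with Q(x) = Q*(x) for all x ∈ S satisfies, for all u ∈ [0,1]^d, max{0, Σᵢ uᵢ − d + 1, max_{x∈S}(Q*(x) − Σᵢ (xᵢ − uᵢ)⁺)} ≤ Q(u) ≤ min{u₁,…,u_d, min_{x∈S}(Q*(x) + Σᵢ (uᵢ − xᵢ)⁺)}, where t⁺ = max{t,0}. -/
open MeasureTheory Filter

noncomputable section

lemma quasi_lip_aux {d : ℕ} {Q : (Fin d → ℝ) → ℝ} (hQ : IsQuasiCopula d Q)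
    {u v : Fin d → ℝ} (hu : u ∈ unitCube d) (hv : v ∈ unitCube d) :
    Q u ≤ Q v + ∑ i, max (u i - v i) 0 := by
  set w : Fin d → ℝ := fun i => max (u i) (v i) with hw
  have hwc : w ∈ unitCube d := fun i => ⟨le_max_of_le_left (hu i).1, max_le (hu i).2 (hv i).2⟩
  have h1 : Q u ≤ Q w := hQ.2.2.2.1 u hu w hwc (fun i => le_max_left _ _)
  have h2 : Q w - Q v ≤ ∑ i, |w i - v i| :=
    (le_abs_self _).trans (hQ.2.2.2.2 w hwc v hv)
  have h3 : ∀ i, |w i - v i| = max (u i - v i) 0 := by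
    intro i
    rw [abs_of_nonneg (by simp [hw])]
    show u i ⊔ v i - v i = (u i - v i) ⊔ 0
    rcases le_total (u i) (v i) with h | h
    · simp [max_eq_right h, max_eq_right (sub_nonpos.2 h)]
    · simp [max_eq_left h, max_eq_left (sub_nonneg.2 h)]
  rw [Finset.sum_congr rfl (fun i _ => h3 i)] at h2
  linarith

/-- improved Fréchet–Hoeffding bounds for quasi-copulas prescribed on a
compact set `S`. -/
theorem improved_FH_bounds {d : ℕ} (hd : 0 < d)
    (S : Set (Fin d → ℝ)) (hSne : S.Nonempty) (hScomp : IsCompact S)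
    (hScube : S ⊆ unitCube d)
    (Qstar Q : (Fin d → ℝ) → ℝ)
    (hQstar : IsQuasiCopula d Qstar) (hQ : IsQuasiCopula d Q)
    (hQS : ∀ x ∈ S, Q x = Qstar x)
    (u : Fin d → ℝ) (hu : u ∈ unitCube d) :
    max (max 0 ((∑ i, u i) - (d : ℝ) + 1))
        (sSup ((fun x => Qstar x - ∑ i, max (x i - u i) 0) '' S)) ≤ Q u ∧
    Q u ≤ min (FHupper hd u)
        (sInf ((fun x => Qstar x + ∑ i, max (u i - x i) 0) '' S)) := by
  have hQu0 : (0 : ℝ) ≤ Q u := (hQ.1 u hu).1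
  constructor
  · apply max_le
    · apply max_le hQu0
      -- FH lower bound via Lipschitz from the all-ones point
      have hones : (fun _ : Fin d => (1 : ℝ)) ∈ unitCube d := fun i => ⟨zero_le_one, le_rfl⟩
      have hQ1 : Q (fun _ => 1) = 1 := by
        have := hQ.2.2.1 ⟨0, hd⟩ 1 ⟨zero_le_one, le_rfl⟩
        simpa using this
      have := quasi_lip_aux hQ hones hu
      rw [hQ1] at this
      have hsum : ∑ i, max ((1 : ℝ) - u i) 0 = (d : ℝ) - ∑ i, u i := by
        rw [Finset.sum_congr rfl (fun i _ => max_eq_left (by linarith [(hu i).2]))]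
        simp [Finset.sum_sub_distrib]
      rw [hsum] at this
      linarith
    · apply csSup_le (hSne.image _)
      rintro _ ⟨x, hx, rfl⟩
      have := quasi_lip_aux hQ (hScube hx) hu
      rw [hQS x hx] at this
      dsimp only
      linarith
  · apply le_min
    · apply Finset.le_inf'
      intro i _
      have hv : (fun j => if j = i then u i else 1) ∈ unitCube d := by
        intro j
        by_cases h : j = i <;> simp [h, (hu i).1, (hu i).2]
      have hmono := hQ.2.2.2.1 u hu _ hv (fun j => by
        by_cases h : j = i <;> simp [h, (hu j).2])
      rw [hQ.2.2.1 i (u i) (hu i)] at hmono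
      exact hmono
    · apply le_csInf (hSne.image _)
      rintro _ ⟨x, hx, rfl⟩
      have := quasi_lip_aux hQ hu (hScube hx)
      rw [hQS x hx] at this
      dsimp only
      linarith
end
end

section
/- Let S be a nonempty compact subset of [0,1]^d and let Q* be a d-quasi-copula. Define Q̲^{S,Q*}(u) = max{0, Σᵢ uᵢ − d + 1, max_{x∈S}(Q*(x) − Σᵢ (xᵢ − uᵢ)⁺)} and Q̄^{S,Q*}(u) = min{u₁,…,u_d, min_{x∈S}(Q*(x) + Σᵢ (uᵢ − xᵢ)⁺)} for u ∈ [0,1]^d, where t⁺ = max{t,0}. Then Q̲^{S,Q*} and Q̄^{S,Q*} are d-quasi-copulas, and Q̲^{S,Q*}(x) = Q*(x) = Q̄^{S,Q*}(x) for all x ∈ S. -/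
open MeasureTheory Filter

noncomputable section

/-!
Write `e(u, v) = ∑ᵢ (uᵢ - vᵢ)⁺`. On the unit cube the single inequality `Q u - Q v ≤ e(u, v)`
encodes both monotonicity and the ℓ¹-Lipschitz condition (QC2, QC3), and every quasi-copula
satisfies it: compare `u` with `u ⊔ v`. The inner terms of the two bounds are the McShane-type
extensions `sup_{x ∈ S} (Q* x - e(x, u))` and `inf_{x ∈ S} (Q* x + e(u, x))` of `Q*|_S` for the
asymmetric distance `e`; by the triangle inequality for `e` they satisfy the same inequality and
agree with `Q*` on `S`. Taking max with `W_d`, resp. min with `M_d`, preserves it, and the results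
lie between `W_d` and `Q*`, resp. `Q*` and `M_d`. A function satisfying the inequality that lies
between two quasi-copulas inherits their boundary values, hence is a quasi-copula.
-/

section Excess

variable {ι : Type*} [Fintype ι]

def excess (u v : ι → ℝ) : ℝ := ∑ i, max (u i - v i) 0

lemma excess_nonneg (u v : ι → ℝ) : 0 ≤ excess u v :=
  Finset.sum_nonneg fun _ _ => le_max_right _ _

lemma excess_self (u : ι → ℝ) : excess u u = 0 := by
  simp [excess]

lemma excess_eq_zero_of_le {u v : ι → ℝ} (h : u ≤ v) : excess u v = 0 :=
  Finset.sum_eq_zero fun i _ => max_eq_right (sub_nonpos.2 (h i))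

lemma excess_triangle (u v w : ι → ℝ) : excess u w ≤ excess u v + excess v w := by
  rw [excess, excess, excess, ← Finset.sum_add_distrib]
  refine Finset.sum_le_sum fun i _ => max_le ?_ (by positivity)
  linarith [le_max_left (u i - v i) 0, le_max_left (v i - w i) 0]

lemma sub_le_excess (u v : ι → ℝ) (i : ι) : u i - v i ≤ excess u v :=
  (le_max_left _ _).trans <|
    Finset.single_le_sum (f := fun i => max (u i - v i) 0) (fun _ _ => le_max_right _ _)
      (Finset.mem_univ i)

lemma sum_sub_le_excess (u v : ι → ℝ) : ∑ i, (u i - v i) ≤ excess u v :=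
  Finset.sum_le_sum fun _ _ => le_max_left _ _

lemma excess_le_sum_abs_sub (u v : ι → ℝ) : excess u v ≤ ∑ i, |u i - v i| :=
  Finset.sum_le_sum fun _ _ => max_le (le_abs_self _) (abs_nonneg _)

def ExcessLipschitzOn (s : Set (ι → ℝ)) (F : (ι → ℝ) → ℝ) : Prop :=
  ∀ u ∈ s, ∀ v ∈ s, F u - F v ≤ excess u v

namespace ExcessLipschitzOn

variable {s t : Set (ι → ℝ)} {F G : (ι → ℝ) → ℝ}

lemma mono (hF : ExcessLipschitzOn t F) (hst : s ⊆ t) : ExcessLipschitzOn s F :=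
  fun u hu v hv => hF u (hst hu) v (hst hv)

lemma le_of_le (hF : ExcessLipschitzOn s F) {u v : ι → ℝ} (hu : u ∈ s) (hv : v ∈ s)
    (huv : u ≤ v) : F u ≤ F v := by
  linarith [hF u hu v hv, excess_eq_zero_of_le huv]

lemma abs_sub_le (hF : ExcessLipschitzOn s F) {u v : ι → ℝ} (hu : u ∈ s) (hv : v ∈ s) :
    |F u - F v| ≤ ∑ i, |u i - v i| := by
  have hsymm : ∑ i, |v i - u i| = ∑ i, |u i - v i| :=
    Finset.sum_congr rfl fun _ _ => abs_sub_comm _ _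
  rw [abs_sub_le_iff]
  exact ⟨(hF u hu v hv).trans (excess_le_sum_abs_sub u v),
    hsymm ▸ (hF v hv u hu).trans (excess_le_sum_abs_sub v u)⟩

lemma max (hF : ExcessLipschitzOn s F) (hG : ExcessLipschitzOn s G) :
    ExcessLipschitzOn s fun u => max (F u) (G u) := by
  intro u hu v hv
  have hFuv := hF u hu v hv
  have hGuv := hG u hu v hv
  dsimp only
  rw [sub_le_iff_le_add', ← max_add_add_right]
  exact max_le_max (by linarith) (by linarith)

lemma min (hF : ExcessLipschitzOn s F) (hG : ExcessLipschitzOn s G) :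
    ExcessLipschitzOn s fun u => min (F u) (G u) := by
  intro u hu v hv
  have hFuv := hF u hu v hv
  have hGuv := hG u hu v hv
  dsimp only
  rw [sub_le_iff_le_add', ← min_add_add_right]
  exact min_le_min (by linarith) (by linarith)

end ExcessLipschitzOn

end Excess

section McShane

variable {ι : Type*} [Fintype ι] {S s : Set (ι → ℝ)} {Q : (ι → ℝ) → ℝ}

def lowerMcShane (S : Set (ι → ℝ)) (Q : (ι → ℝ) → ℝ) (u : ι → ℝ) : ℝ :=
  sSup ((fun x => Q x - excess x u) '' S)

def upperMcShane (S : Set (ι → ℝ)) (Q : (ι → ℝ) → ℝ) (u : ι → ℝ) : ℝ :=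
  sInf ((fun x => Q x + excess u x) '' S)

lemma bddAbove_lowerMcShane_image (hQ : ExcessLipschitzOn s Q) (hSs : S ⊆ s) (hS : S.Nonempty)
    (u : ι → ℝ) : BddAbove ((fun x => Q x - excess x u) '' S) := by
  obtain ⟨x₀, hx₀⟩ := hS
  refine ⟨Q x₀ + excess u x₀, ?_⟩
  rintro _ ⟨x, hx, rfl⟩
  linarith [hQ x (hSs hx) x₀ (hSs hx₀), excess_triangle x u x₀]

lemma bddBelow_upperMcShane_image (hQ : ExcessLipschitzOn s Q) (hSs : S ⊆ s) (hS : S.Nonempty)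
    (u : ι → ℝ) : BddBelow ((fun x => Q x + excess u x) '' S) := by
  obtain ⟨x₀, hx₀⟩ := hS
  refine ⟨Q x₀ - excess x₀ u, ?_⟩
  rintro _ ⟨x, hx, rfl⟩
  linarith [hQ x₀ (hSs hx₀) x (hSs hx), excess_triangle x₀ u x]

lemma lowerMcShane_le (hQ : ExcessLipschitzOn s Q) (hSs : S ⊆ s) (hS : S.Nonempty)
    {u : ι → ℝ} (hu : u ∈ s) : lowerMcShane S Q u ≤ Q u := by
  refine csSup_le (hS.image _) ?_
  rintro _ ⟨x, hx, rfl⟩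
  linarith [hQ x (hSs hx) u hu]

lemma le_upperMcShane (hQ : ExcessLipschitzOn s Q) (hSs : S ⊆ s) (hS : S.Nonempty)
    {u : ι → ℝ} (hu : u ∈ s) : Q u ≤ upperMcShane S Q u := by
  refine le_csInf (hS.image _) ?_
  rintro _ ⟨x, hx, rfl⟩
  linarith [hQ u hu x (hSs hx)]

lemma lowerMcShane_eq_of_mem (hQ : ExcessLipschitzOn s Q) (hSs : S ⊆ s) {x : ι → ℝ}
    (hx : x ∈ S) : lowerMcShane S Q x = Q x :=
  (lowerMcShane_le hQ hSs ⟨x, hx⟩ (hSs hx)).antisymm <|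
    le_csSup (bddAbove_lowerMcShane_image hQ hSs ⟨x, hx⟩ x) ⟨x, hx, by simp [excess_self]⟩

lemma upperMcShane_eq_of_mem (hQ : ExcessLipschitzOn s Q) (hSs : S ⊆ s) {x : ι → ℝ}
    (hx : x ∈ S) : upperMcShane S Q x = Q x :=
  (csInf_le (bddBelow_upperMcShane_image hQ hSs ⟨x, hx⟩ x) ⟨x, hx, by simp [excess_self]⟩).antisymm
    (le_upperMcShane hQ hSs ⟨x, hx⟩ (hSs hx))

lemma excessLipschitzOn_lowerMcShane (hQ : ExcessLipschitzOn s Q) (hSs : S ⊆ s)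
    (hS : S.Nonempty) : ExcessLipschitzOn Set.univ (lowerMcShane S Q) := by
  intro u _ v _
  rw [sub_le_iff_le_add']
  refine csSup_le (hS.image _) ?_
  rintro _ ⟨x, hx, rfl⟩
  calc Q x - excess x u ≤ (Q x - excess x v) + excess u v := by
        linarith [excess_triangle x u v]
    _ ≤ lowerMcShane S Q v + excess u v := by
        gcongr
        exact le_csSup (bddAbove_lowerMcShane_image hQ hSs hS v) ⟨x, hx, rfl⟩

lemma excessLipschitzOn_upperMcShane (hQ : ExcessLipschitzOn s Q) (hSs : S ⊆ s)
    (hS : S.Nonempty) : ExcessLipschitzOn Set.univ (upperMcShane S Q) := by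
  intro u _ v _
  rw [sub_le_iff_le_add', ← sub_le_iff_le_add]
  refine le_csInf (hS.image _) ?_
  rintro _ ⟨x, hx, rfl⟩
  calc upperMcShane S Q u - excess u v ≤ (Q x + excess u x) - excess u v :=
        sub_le_sub_right (csInf_le (bddBelow_upperMcShane_image hQ hSs hS u) ⟨x, hx, rfl⟩) _
    _ ≤ Q x + excess v x := by linarith [excess_triangle u v x]

end McShane

section QuasiCopula

variable {d : ℕ} {Q : (Fin d → ℝ) → ℝ}

lemma ite_mem_unitCube (i : Fin d) {t : ℝ} (ht : t ∈ Set.Icc (0 : ℝ) 1) :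
    (fun j => if j = i then t else 1) ∈ unitCube d := by
  intro j
  dsimp only
  split_ifs
  exacts [ht, ⟨zero_le_one, le_rfl⟩]

lemma sum_ite_eq_one (i : Fin d) (t : ℝ) :
    ∑ j, (if j = i then t else 1) = (d : ℝ) - 1 + t := by
  have h : ∀ j, (if j = i then t else (1 : ℝ)) = 1 + if j = i then t - 1 else 0 := by
    intro j; split_ifs <;> ring
  simp only [h, Finset.sum_add_distrib, Fintype.sum_ite_eq', Finset.sum_const, Finset.card_univ,
    Fintype.card_fin, nsmul_eq_mul, mul_one]
  ring

lemma IsQuasiCopula.excessLipschitzOn (hQ : IsQuasiCopula d Q) :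
    ExcessLipschitzOn (unitCube d) Q := by
  intro u hu v hv
  have hsup : u ⊔ v ∈ unitCube d := fun i => ⟨(hu i).1.trans le_sup_left, sup_le (hu i).2 (hv i).2⟩
  have hdiff : ∀ i, |(u ⊔ v) i - v i| = max (u i - v i) 0 := fun i => by
    rw [Pi.sup_apply, ← max_sub_sub_right, sub_self, abs_of_nonneg (le_max_right _ _)]
  calc Q u - Q v ≤ Q (u ⊔ v) - Q v :=
        sub_le_sub_right (hQ.2.2.2.1 u hu _ hsup fun i => le_max_left _ _) _
    _ ≤ ∑ i, |(u ⊔ v) i - v i| := (le_abs_self _).trans (hQ.2.2.2.2 _ hsup v hv)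
    _ = excess u v := Finset.sum_congr rfl fun i _ => hdiff i

lemma ExcessLipschitzOn.apply_le_of_le_margin (hQ : ExcessLipschitzOn (unitCube d) Q)
    (hQm : ∀ (i : Fin d), ∀ t ∈ Set.Icc (0 : ℝ) 1, Q (fun j => if j = i then t else 1) = t)
    {u : Fin d → ℝ} (hu : u ∈ unitCube d) {i : Fin d} {t : ℝ} (ht : t ∈ Set.Icc (0 : ℝ) 1)
    (hut : u i ≤ t) : Q u ≤ t := by
  rw [← hQm i t ht]
  refine hQ.le_of_le hu (ite_mem_unitCube i ht) fun j => ?_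
  dsimp only
  split_ifs with h
  exacts [h ▸ hut, (hu j).2]

lemma IsQuasiCopula.of_excessLipschitzOn (hd : 0 < d) (hQ₀ : ∀ u ∈ unitCube d, 0 ≤ Q u)
    (hQm : ∀ (i : Fin d), ∀ t ∈ Set.Icc (0 : ℝ) 1, Q (fun j => if j = i then t else 1) = t)
    (hQ : ExcessLipschitzOn (unitCube d) Q) : IsQuasiCopula d Q :=
  ⟨fun u hu => ⟨hQ₀ u hu,
      hQ.apply_le_of_le_margin hQm hu (i := ⟨0, hd⟩) ⟨zero_le_one, le_rfl⟩ (hu _).2⟩,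
    fun u hu ⟨_, hi⟩ => (hQ.apply_le_of_le_margin hQm hu ⟨le_rfl, zero_le_one⟩ hi.le).antisymm
      (hQ₀ u hu),
    hQm, fun _ hu _ hv => hQ.le_of_le hu hv, fun _ hu _ hv => hQ.abs_sub_le hu hv⟩

lemma IsQuasiCopula.of_le_of_le (hd : 0 < d) {Q₁ Q₂ : (Fin d → ℝ) → ℝ}
    (h₁ : IsQuasiCopula d Q₁) (h₂ : IsQuasiCopula d Q₂) (hQ₁ : ∀ u ∈ unitCube d, Q₁ u ≤ Q u)
    (hQ₂ : ∀ u ∈ unitCube d, Q u ≤ Q₂ u) (hQ : ExcessLipschitzOn (unitCube d) Q) :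
    IsQuasiCopula d Q := by
  refine .of_excessLipschitzOn hd (fun u hu => (h₁.1 u hu).1.trans (hQ₁ u hu)) (fun i t ht => ?_) hQ
  have hu := ite_mem_unitCube i ht
  exact ((hQ₂ _ hu).trans_eq (h₂.2.2.1 i t ht)).antisymm
    ((h₁.2.2.1 i t ht).symm.trans_le (hQ₁ _ hu))

lemma isQuasiCopula_FHlower (hd : 0 < d) : IsQuasiCopula d (FHlower d) := by
  refine .of_excessLipschitzOn hd (fun _ _ => le_max_left _ _) (fun i t ht => ?_) ?_
  · rw [FHlower, sum_ite_eq_one, show (d : ℝ) - 1 + t - d + 1 = t by ring]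
    exact max_eq_right ht.1
  · intro u _ v _
    have h := sum_sub_le_excess u v
    rw [Finset.sum_sub_distrib] at h
    rw [FHlower, FHlower, sub_le_iff_le_add]
    exact max_le (by linarith [le_max_left 0 (∑ i, v i - d + 1), excess_nonneg u v])
      (by linarith [le_max_right 0 (∑ i, v i - d + 1)])

lemma FHupper_le (hd : 0 < d) (u : Fin d → ℝ) (i : Fin d) : FHupper hd u ≤ u i :=
  Finset.inf'_le _ (Finset.mem_univ i)

lemma le_FHupper_iff (hd : 0 < d) {u : Fin d → ℝ} {c : ℝ} : c ≤ FHupper hd u ↔ ∀ i, c ≤ u i :=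
  (Finset.le_inf'_iff _ _).trans ⟨fun h i => h i (Finset.mem_univ i), fun h i _ => h i⟩

lemma isQuasiCopula_FHupper (hd : 0 < d) : IsQuasiCopula d (FHupper hd) := by
  refine .of_excessLipschitzOn hd (fun u hu => (le_FHupper_iff hd).2 fun i => (hu i).1)
    (fun i t ht => le_antisymm ?_ ((le_FHupper_iff hd).2 fun j => ?_)) ?_
  · simpa using FHupper_le hd (fun j => if j = i then t else 1) i
  · by_cases h : j = i <;> simp [h, ht.2]
  · intro u _ v _
    obtain ⟨j, -, hj⟩ := Finset.exists_mem_eq_inf' ⟨⟨0, hd⟩, Finset.mem_univ _⟩ v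
    have hvj : FHupper hd v = v j := hj
    linarith [FHupper_le hd u j, sub_le_excess u v j]

lemma IsQuasiCopula.FHlower_le (hd : 0 < d) (hQ : IsQuasiCopula d Q) {u : Fin d → ℝ}
    (hu : u ∈ unitCube d) : FHlower d u ≤ Q u := by
  have hone : (fun _ => (1 : ℝ)) ∈ unitCube d := fun _ => ⟨zero_le_one, le_rfl⟩
  have hQone : Q (fun _ => 1) = 1 := by simpa using hQ.2.2.1 ⟨0, hd⟩ 1 ⟨zero_le_one, le_rfl⟩
  have hexcess : excess (fun _ => 1) u = d - ∑ i, u i := by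
    rw [excess, Finset.sum_congr rfl fun i _ => max_eq_left (sub_nonneg.2 (hu i).2),
      Finset.sum_sub_distrib]
    simp
  have hQu := hQ.excessLipschitzOn _ hone u hu
  exact max_le (hQ.1 u hu).1 (by linarith)

lemma IsQuasiCopula.le_FHupper (hd : 0 < d) (hQ : IsQuasiCopula d Q) {u : Fin d → ℝ}
    (hu : u ∈ unitCube d) : Q u ≤ FHupper hd u :=
  (le_FHupper_iff hd).2 fun i =>
    hQ.excessLipschitzOn.apply_le_of_le_margin hQ.2.2.1 hu (hu i) le_rfl

end QuasiCopula

theorem improved_FH_bounds_quasi_copulas_general {d : ℕ} (hd : 0 < d)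
    (S : Set (Fin d → ℝ)) (hSne : S.Nonempty)
    (hScube : S ⊆ unitCube d)
    (Qstar : (Fin d → ℝ) → ℝ) (hQstar : IsQuasiCopula d Qstar) :
    IsQuasiCopula d (fun u => max (max 0 ((∑ i, u i) - (d : ℝ) + 1))
        (sSup ((fun x => Qstar x - ∑ i, max (x i - u i) 0) '' S))) ∧
    IsQuasiCopula d (fun u => min (FHupper hd u)
        (sInf ((fun x => Qstar x + ∑ i, max (u i - x i) 0) '' S))) ∧
    (∀ x ∈ S, max (max 0 ((∑ i, x i) - (d : ℝ) + 1))
        (sSup ((fun y => Qstar y - ∑ i, max (y i - x i) 0) '' S)) = Qstar x) ∧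
    (∀ x ∈ S, min (FHupper hd x)
        (sInf ((fun y => Qstar y + ∑ i, max (x i - y i) 0) '' S)) = Qstar x) := by
  have hW := isQuasiCopula_FHlower hd
  have hM := isQuasiCopula_FHupper hd
  have hQ := hQstar.excessLipschitzOn
  have hL : ExcessLipschitzOn (unitCube d) (lowerMcShane S Qstar) :=
    (excessLipschitzOn_lowerMcShane hQ hScube hSne).mono (Set.subset_univ _)
  have hU : ExcessLipschitzOn (unitCube d) (upperMcShane S Qstar) :=
    (excessLipschitzOn_upperMcShane hQ hScube hSne).mono (Set.subset_univ _)
  refine ⟨?_, ?_, fun x hx => ?_, fun x hx => ?_⟩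
  · exact hW.of_le_of_le hd hQstar (fun u _ => le_max_left (FHlower d u) (lowerMcShane S Qstar u))
      (fun u hu => max_le (hQstar.FHlower_le hd hu) (lowerMcShane_le hQ hScube hSne hu))
      (hW.excessLipschitzOn.max hL)
  · exact hQstar.of_le_of_le hd hM
      (fun u hu => le_min (hQstar.le_FHupper hd hu) (le_upperMcShane hQ hScube hSne hu))
      (fun u _ => min_le_left (FHupper hd u) (upperMcShane S Qstar u))
      (hM.excessLipschitzOn.min hU)
  · change max (FHlower d x) (lowerMcShane S Qstar x) = Qstar x
    rw [lowerMcShane_eq_of_mem hQ hScube hx]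
    exact max_eq_right (hQstar.FHlower_le hd (hScube hx))
  · change min (FHupper hd x) (upperMcShane S Qstar x) = Qstar x
    rw [upperMcShane_eq_of_mem hQ hScube hx]
    exact min_eq_right (hQstar.le_FHupper hd (hScube hx))

/-- the improved Fréchet–Hoeffding bounds for prescription on a compact set `S`
are themselves quasi-copulas and coincide with `Q*` on `S`. -/
theorem improved_FH_bounds_quasi_copulas {d : ℕ} (hd : 0 < d)
    (S : Set (Fin d → ℝ)) (hSne : S.Nonempty) (hScomp : IsCompact S)
    (hScube : S ⊆ unitCube d)
    (Qstar : (Fin d → ℝ) → ℝ) (hQstar : IsQuasiCopula d Qstar) :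
    IsQuasiCopula d (fun u => max (max 0 ((∑ i, u i) - (d : ℝ) + 1))
        (sSup ((fun x => Qstar x - ∑ i, max (x i - u i) 0) '' S))) ∧
    IsQuasiCopula d (fun u => min (FHupper hd u)
        (sInf ((fun x => Qstar x + ∑ i, max (u i - x i) 0) '' S))) ∧
    (∀ x ∈ S, max (max 0 ((∑ i, x i) - (d : ℝ) + 1))
        (sSup ((fun y => Qstar y - ∑ i, max (y i - x i) 0) '' S)) = Qstar x) ∧
    (∀ x ∈ S, min (FHupper hd x)
        (sInf ((fun y => Qstar y + ∑ i, max (x i - y i) 0) '' S)) = Qstar x) :=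
  improved_FH_bounds_quasi_copulas_general hd S hSne hScube Qstar hQstar
end
end

section
/- Let C* be a d-copula, δ ≥ 0, and u ∈ [0,1]^d, and let D_KS denote the Kolmogorov–Smirnov distance D_KS(Q,Q') = sup_{v∈[0,1]^d} |Q(v) − Q'(v)|. Then the set {α ∈ [W_d(u), M_d(u)] : D_KS(Q̄^{u,α} ∧ C*, C*) ≤ δ} has minimum equal to max{C*(u) − δ, W_d(u)}. -/
open MeasureTheory Filter

noncomputable section

/-- for the Kolmogorov–Smirnov distance, the minimal admissible prescribed
value is `max{C*(u) − δ, W_d(u)}`. -/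
theorem KS_lower_bound_explicit {d : ℕ} (hd : 0 < d)
    (Cstar : (Fin d → ℝ) → ℝ) (hCstar : IsCopula d Cstar)
    (δ : ℝ) (hδ : 0 ≤ δ) (u : Fin d → ℝ) (hu : u ∈ unitCube d) :
    IsLeast {α | α ∈ Set.Icc (FHlower d u) (FHupper hd u) ∧
        DKS d (fun v => min (Qup hd u α v) (Cstar v)) Cstar ≤ δ}
      (max (Cstar u - δ) (FHlower d u)) := by
  obtain ⟨⟨hrange, hzero, hmarg, hmono, hlip⟩, _⟩ := hCstar
  have hcube1 : (fun _ : Fin d => (1:ℝ)) ∈ unitCube d := fun i => by norm_num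
  have hone : Cstar (fun _ => 1) = 1 := by
    have := hmarg ⟨0, hd⟩ 1 (by norm_num)
    simpa using this
  -- Cstar ≤ FHupper on the cube
  have hM : ∀ v ∈ unitCube d, Cstar v ≤ FHupper hd v := by
    intro v hv
    apply Finset.le_inf'
    intro i _
    have hvin : (fun j => if j = i then v i else 1) ∈ unitCube d := by
      intro j; by_cases h : j = i <;> simp [h, (hv i).1, (hv i).2]
    calc Cstar v ≤ Cstar (fun j => if j = i then v i else 1) := by
          apply hmono v hv _ hvin
          intro j; by_cases h : j = i <;> simp [h, (hv j).2]
      _ = v i := hmarg i (v i) (hv i)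
  -- FHlower ≤ Cstar on the cube
  have hW : ∀ v ∈ unitCube d, FHlower d v ≤ Cstar v := by
    intro v hv
    apply max_le (hrange v hv).1
    have h := hlip v hv (fun _ => 1) hcube1
    rw [hone] at h
    have h2 : ∑ i, |v i - 1| = (d:ℝ) - ∑ i, v i := by
      rw [Finset.sum_congr rfl (fun i _ => abs_of_nonpos (by linarith [(hv i).2]))]
      rw [show (fun i => -(v i - 1)) = (fun i => 1 - v i) by funext i; ring]
      rw [Finset.sum_sub_distrib]
      simp
    rw [h2] at h
    linarith [(abs_le.mp h).1]
  have hFHupper_nonneg : ∀ v ∈ unitCube d, 0 ≤ FHupper hd v := by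
    intro v hv
    apply Finset.le_inf'
    intro i _
    exact (hv i).1
  -- Lipschitz-monotone combination
  have hLip' : ∀ v ∈ unitCube d, Cstar v ≤ Cstar u + ∑ i, max (v i - u i) 0 := by
    intro v hv
    set w : Fin d → ℝ := fun i => max (u i) (v i) with hwdef
    have hw : w ∈ unitCube d := fun i =>
      ⟨le_max_of_le_left (hu i).1, max_le (hu i).2 (hv i).2⟩
    have h1 : Cstar v ≤ Cstar w := hmono v hv w hw (fun i => le_max_right _ _)
    have h2 : |Cstar w - Cstar u| ≤ ∑ i, |w i - u i| := hlip w hw u hu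
    have h3 : ∑ i, |w i - u i| = ∑ i, max (v i - u i) 0 := by
      apply Finset.sum_congr rfl
      intro i _
      have hui : u i ≤ w i := le_max_left _ _
      rw [abs_of_nonneg (by linarith)]
      show max (u i) (v i) - u i = max (v i - u i) 0
      rcases le_total (u i) (v i) with h | h
      · rw [max_eq_right h, max_eq_left (sub_nonneg.mpr h)]
      · rw [max_eq_left h, max_eq_right (sub_nonpos.mpr h), sub_self]
    rw [h3] at h2
    linarith [(abs_le.mp h2).2]
  have hWu : 0 ≤ FHlower d u := le_max_left _ _
  constructor
  · refine ⟨⟨le_max_right _ _, ?_⟩, ?_⟩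
    · exact max_le (by linarith [hM u hu]) ((hW u hu).trans (hM u hu))
    · apply Real.sSup_le _ hδ
      rintro x ⟨v, hv, rfl⟩
      have hkey : Cstar v - δ ≤
          min (Qup hd u (max (Cstar u - δ) (FHlower d u)) v) (Cstar v) := by
        apply le_min _ (by linarith)
        unfold Qup
        apply le_min
        · linarith [hM v hv]
        · have h1 := hLip' v hv
          have h2 : Cstar u - δ ≤ max (Cstar u - δ) (FHlower d u) := le_max_left _ _
          linarith
      have hle : min (Qup hd u (max (Cstar u - δ) (FHlower d u)) v) (Cstar v) ≤ Cstar v :=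
        min_le_right _ _
      show |min (Qup hd u (max (Cstar u - δ) (FHlower d u)) v) (Cstar v) - Cstar v| ≤ δ
      rw [abs_of_nonpos (by linarith)]
      linarith
  · rintro α ⟨⟨hα1, hα2⟩, hDKS⟩
    apply max_le _ hα1
    have hα0 : 0 ≤ α := hWu.trans hα1
    have hbdd : BddAbove ((fun v => |min (Qup hd u α v) (Cstar v) - Cstar v|) '' unitCube d) := by
      refine ⟨1, ?_⟩
      rintro x ⟨v, hv, rfl⟩
      have h0 : 0 ≤ min (Qup hd u α v) (Cstar v) := by
        apply le_min _ (hrange v hv).1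
        unfold Qup
        apply le_min (hFHupper_nonneg v hv)
        have : 0 ≤ ∑ i, max (v i - u i) 0 :=
          Finset.sum_nonneg (fun i _ => le_max_right _ _)
        linarith
      have hle : min (Qup hd u α v) (Cstar v) ≤ Cstar v := min_le_right _ _
      show |min (Qup hd u α v) (Cstar v) - Cstar v| ≤ 1
      rw [abs_of_nonpos (by linarith)]
      linarith [(hrange v hv).2]
    have hQu : Qup hd u α u = α := by
      unfold Qup
      have : ∑ i, max (u i - u i) 0 = 0 := by simp
      rw [this, add_zero, min_eq_right hα2]
    simp only [DKS] at hDKS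
    have hval : |min (Qup hd u α u) (Cstar u) - Cstar u| ≤ δ :=
      le_trans (le_csSup hbdd ⟨u, hu, rfl⟩) hDKS
    rw [hQu] at hval
    have hle : min α (Cstar u) ≤ Cstar u := min_le_right _ _
    rw [abs_of_nonpos (by linarith)] at hval
    linarith [min_le_left α (Cstar u)]
end
end

section
/- Let C* be a d-copula, δ ≥ 0, and u ∈ [0,1]^d, and let D_KS denote the Kolmogorov–Smirnov distance D_KS(Q,Q') = sup_{v∈[0,1]^d} |Q(v) − Q'(v)|. Then the set {α ∈ [W_d(u), M_d(u)] : D_KS(Q̲^{u,α} ∨ C*, C*) ≤ δ} has maximum equal to min{C*(u) + δ, M_d(u)}. -/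
open MeasureTheory Filter

noncomputable section

section Aux
variable {d : ℕ} {C : (Fin d → ℝ) → ℝ}

lemma copula_le_add (hC : IsQuasiCopula d C) {v w : Fin d → ℝ}
    (hv : v ∈ unitCube d) (hw : w ∈ unitCube d) :
    C v ≤ C w + ∑ i, max (v i - w i) 0 := by
  set t : Fin d → ℝ := fun i => max (v i) (w i) with ht
  have htc : t ∈ unitCube d := fun i => ⟨le_max_of_le_left (hv i).1, max_le (hv i).2 (hw i).2⟩
  have h1 : C v ≤ C t := hC.2.2.2.1 v hv t htc fun i => le_max_left _ _
  have h2 : |C t - C w| ≤ ∑ i, |t i - w i| := hC.2.2.2.2 t htc w hw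
  have h3 : ∀ i, |t i - w i| = max (v i - w i) 0 := by
    intro i
    rw [ht]
    simp only
    rcases le_total (v i) (w i) with h | h
    · rw [max_eq_right h, max_eq_right (by linarith), sub_self, abs_zero]
    · rw [max_eq_left h, max_eq_left (by linarith), abs_of_nonneg (by linarith)]
  have h4 : C t - C w ≤ ∑ i, |t i - w i| := (abs_le.mp h2).2
  have h5 : (∑ i, |t i - w i|) = ∑ i, max (v i - w i) 0 := Finset.sum_congr rfl (fun i _ => h3 i)
  linarith

lemma FHlower_le_copula (hd : 0 < d) (hC : IsQuasiCopula d C) {v : Fin d → ℝ}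
    (hv : v ∈ unitCube d) : FHlower d v ≤ C v := by
  have hone : C (fun _ => (1:ℝ)) = 1 := by
    have := hC.2.2.1 ⟨0, hd⟩ 1 ⟨zero_le_one, le_rfl⟩
    simpa [ite_self] using this
  have hlip := hC.2.2.2.2 (fun _ => (1:ℝ)) (fun i => ⟨zero_le_one, le_rfl⟩) v hv
  have hsum : (∑ i, |(1:ℝ) - v i|) = (d : ℝ) - ∑ i, v i := by
    have h : ∀ i ∈ Finset.univ, |(1:ℝ) - v i| = 1 - v i :=
      fun i _ => abs_of_nonneg (by linarith [(hv i).2])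
    rw [Finset.sum_congr rfl h, Finset.sum_sub_distrib]
    simp
  rw [hone, hsum] at hlip
  have h6 : 1 - C v ≤ (d:ℝ) - ∑ i, v i := (abs_le.mp hlip).2
  exact max_le (hC.1 v hv).1 (by linarith)

lemma copula_le_FHupper (hd : 0 < d) (hC : IsQuasiCopula d C) {v : Fin d → ℝ}
    (hv : v ∈ unitCube d) : C v ≤ FHupper hd v := by
  apply Finset.le_inf'
  intro j _
  have he : (fun k => if k = j then v j else (1:ℝ)) ∈ unitCube d := by
    intro k; by_cases h : k = j <;> simp [h, (hv j).1, (hv j).2]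
  have hm : C v ≤ C (fun k => if k = j then v j else (1:ℝ)) :=
    hC.2.2.2.1 v hv _ he (fun k => by by_cases h : k = j <;> simp [h, (hv k).2])
  have hmarg := hC.2.2.1 j (v j) ⟨(hv j).1, (hv j).2⟩
  linarith [hm, hmarg.symm ▸ hm]

end Aux

/-- for the Kolmogorov–Smirnov distance, the maximal admissible prescribed
value is `min{C*(u) + δ, M_d(u)}`. -/
theorem KS_upper_bound_explicit {d : ℕ} (hd : 0 < d)
    (Cstar : (Fin d → ℝ) → ℝ) (hCstar : IsCopula d Cstar)
    (δ : ℝ) (hδ : 0 ≤ δ) (u : Fin d → ℝ) (hu : u ∈ unitCube d) :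
    IsGreatest {α | α ∈ Set.Icc (FHlower d u) (FHupper hd u) ∧
        DKS d (fun v => max (Qlow d u α v) (Cstar v)) Cstar ≤ δ}
      (min (Cstar u + δ) (FHupper hd u)) := by
  obtain ⟨hQ, _⟩ := hCstar
  have hWC : FHlower d u ≤ Cstar u := FHlower_le_copula hd hQ hu
  have hCM : Cstar u ≤ FHupper hd u := copula_le_FHupper hd hQ hu
  constructor
  · refine ⟨⟨le_min (by linarith) (by linarith), min_le_right _ _⟩, ?_⟩
    apply Real.sSup_le _ hδ
    rintro x ⟨v, hv, rfl⟩
    have hFl : FHlower d v ≤ Cstar v := FHlower_le_copula hd hQ hv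
    have hA : Cstar u ≤ Cstar v + ∑ i, max (u i - v i) 0 := copula_le_add hQ hu hv
    have hq : Qlow d u (min (Cstar u + δ) (FHupper hd u)) v ≤ Cstar v + δ := by
      apply max_le (by linarith)
      have hml : min (Cstar u + δ) (FHupper hd u) ≤ Cstar u + δ := min_le_left _ _
      linarith
    simp only
    rw [abs_of_nonneg (by simp)]
    have hfin := max_le hq (by linarith : Cstar v ≤ Cstar v + δ)
    linarith
  · rintro α ⟨⟨hα1, hα2⟩, hDKS⟩
    refine le_min ?_ hα2
    have hα3 : α ≤ 1 := by
      have h1 : FHupper hd u ≤ u ⟨0, hd⟩ := Finset.inf'_le _ (Finset.mem_univ _)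
      linarith [(hu ⟨0, hd⟩).2]
    have hbdd : BddAbove ((fun v => |max (Qlow d u α v) (Cstar v) - Cstar v|) '' unitCube d) := by
      refine ⟨1, ?_⟩
      rintro x ⟨v, hv, rfl⟩
      simp only
      have h1 : Qlow d u α v ≤ 1 := by
        apply max_le
        · apply max_le zero_le_one
          have hsv : ∑ i, v i ≤ (d:ℝ) := by
            calc ∑ i, v i ≤ ∑ _i : Fin d, (1:ℝ) := Finset.sum_le_sum (fun i _ => (hv i).2)
              _ = d := by simp
          linarith
        · have hs0 : (0:ℝ) ≤ ∑ i, max (u i - v i) 0 :=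
            Finset.sum_nonneg (fun i _ => le_max_right _ _)
          linarith
      rw [abs_of_nonneg (by simp)]
      have h2 : Cstar v ≤ 1 := (hQ.1 v hv).2
      have h3 : 0 ≤ Cstar v := (hQ.1 v hv).1
      have := max_le h1 h2
      linarith
    have hmem : |max (Qlow d u α u) (Cstar u) - Cstar u|
        ∈ (fun v => |max (Qlow d u α v) (Cstar v) - Cstar v|) '' unitCube d := ⟨u, hu, rfl⟩
    have hle : |max (Qlow d u α u) (Cstar u) - Cstar u| ≤ δ := by
      have h := le_csSup hbdd hmem
      simp only [DKS] at hDKS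
      exact le_trans h hDKS
    have hQu : Qlow d u α u = α := by
      unfold Qlow
      have : (∑ i, max (u i - u i) 0) = 0 := by simp
      rw [this, sub_zero]
      exact max_eq_right hα1
    rw [hQu, abs_of_nonneg (by simp)] at hle
    have := le_max_left α (Cstar u)
    linarith
end
end
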